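/- Let 0 < d < D be integers, let L₂ be a d-flat in ℝ^D, let w, r₀ > 0 and 0 < ε ≤ 1 satisfy 4w ≤ ε r₀, and let x ∈ ℝ^D satisfy dist(x, L₂) ≤ r₀ + w. Then the Lebesgue volume of the intersection of the tube T(L₂, w) with the closed ball B(x, (1+ε) r₀) satisfies vol(T(L₂,w) ∩ B(x,(1+ε)r₀)) ≥ ω_d · (√ε · r₀)^d · ω_{D−d} · w^{D−d}, where ω_k denotes the Lebesgue volume of the unit ball in ℝ^k. -/

import Mathlib

open MeasureTheory Metric

/-- The tube of width `w` around a set `L`. -/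
def tube {E : Type*} [PseudoMetricSpace E] (L : Set E) (w : ℝ) : Set E :=
  {y | infDist y L ≤ w}

/-- `ω_k`: the Lebesgue volume of the unit Euclidean ball in `ℝᵏ`. -/
noncomputable def unitBallVol (k : ℕ) : ℝ :=
  (volume (closedBall (0 : EuclideanSpace ℝ (Fin k)) 1)).toReal

/-!
Let `p` be the orthogonal projection of `x` onto `L₂` and `K` the direction of `L₂`. For `a ∈ K`
with `‖a‖ ≤ √ε r₀` and `c ∈ Kᗮ` with `‖c‖ ≤ w`, the point `p + a + c` lies within `w` of `L₂`, and
by Pythagoras its squared distance to `x` is at most `ε r₀² + (r₀ + 2w)²`, which is at most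
`((1 + ε) r₀)²` because `4w ≤ ε r₀`. As `(a, c) ↦ a + c` is a volume-preserving map
`K × Kᗮ → ℝᴰ`, the intersection has volume at least that of a product of a `d`-ball of radius
`√ε r₀` with a `(D - d)`-ball of radius `w`.
-/

open Module

section InnerProductSpace

variable {E : Type*} [NormedAddCommGroup E] [InnerProductSpace ℝ E] [FiniteDimensional ℝ E]
  [MeasurableSpace E] [BorelSpace E]

theorem Submodule.measurePreserving_add_orthogonal (K : Submodule ℝ E) :
    MeasurePreserving (fun z : K × Kᗮ => (z.1 : E) + z.2) :=
  K.orthogonalDecomposition.symm.measurePreserving.comp (WithLp.volume_preserving_toLp K Kᗮ)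

theorem toReal_volume_closedBall_eq_mul_unitBallVol {n : ℕ} (hn : finrank ℝ E = n) (x : E)
    {r : ℝ} (hr : 0 ≤ r) :
    (volume (closedBall x r)).toReal = r ^ n * unitBallVol n := by
  subst hn
  have hunit : volume (closedBall (0 : E) 1) =
      volume (closedBall (0 : EuclideanSpace ℝ (Fin (finrank ℝ E))) 1) := by
    rw [← (stdOrthonormalBasis ℝ E).repr.measurePreserving.measure_preimage
      measurableSet_closedBall.nullMeasurableSet, LinearIsometryEquiv.preimage_closedBall,
      map_zero]
  rw [Measure.addHaar_closedBall' _ _ hr, hunit, ENNReal.toReal_mul,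
    ENNReal.toReal_ofReal (by positivity), unitBallVol]

theorem volume_closedBall_mul_volume_closedBall_le (K : Submodule ℝ E) (p : E) {R w : ℝ}
    {s : Set E} (hs : ∀ a ∈ K, ∀ c ∈ Kᗮ, ‖a‖ ≤ R → ‖c‖ ≤ w → p + (a + c) ∈ s) :
    volume (closedBall (0 : K) R) * volume (closedBall (0 : Kᗮ) w) ≤ volume s := by
  have hΨ := (measurePreserving_add_left volume p).comp K.measurePreserving_add_orthogonal
  calc volume (closedBall (0 : K) R) * volume (closedBall (0 : Kᗮ) w)
      = volume (closedBall (0 : K) R ×ˢ closedBall (0 : Kᗮ) w) := by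
        rw [Measure.volume_eq_prod, Measure.prod_prod]
    _ ≤ volume ((fun z : K × Kᗮ => p + ((z.1 : E) + z.2)) ⁻¹' s) := by
        refine measure_mono ?_
        rintro ⟨a, c⟩ ⟨ha, hc⟩
        exact hs a a.2 c c.2 (by simpa using ha) (by simpa using hc)
    _ ≤ volume s := hΨ.measure_preimage_le s

end InnerProductSpace

theorem add_mem_tube {E : Type*} [SeminormedAddCommGroup E] {s : Set E} {q c : E} {w : ℝ}
    (hq : q ∈ s) (hc : ‖c‖ ≤ w) : q + c ∈ tube s w := by
  refine (infDist_le_dist_of_mem hq).trans ?_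
  rwa [dist_eq_norm, add_sub_cancel_left]

theorem add_add_mem_closedBall_of_mem_orthogonal {E : Type*} [NormedAddCommGroup E]
    [InnerProductSpace ℝ E] {K : Submodule ℝ E} {x p a c : E} (hxp : x - p ∈ Kᗮ) (ha : a ∈ K)
    (hc : c ∈ Kᗮ) {ρ : ℝ} (hρ : 0 ≤ ρ) (h : ‖a‖ ^ 2 + (‖c‖ + ‖x - p‖) ^ 2 ≤ ρ ^ 2) :
    p + (a + c) ∈ closedBall x ρ := by
  have hpyth : ‖p + (a + c) - x‖ ^ 2 = ‖a‖ ^ 2 + ‖c - (x - p)‖ ^ 2 := by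
    rw [show p + (a + c) - x = a + (c - (x - p)) by abel, sq, sq, sq,
      norm_add_sq_eq_norm_sq_add_norm_sq_real
        (Submodule.inner_right_of_mem_orthogonal ha (Submodule.sub_mem _ hc hxp))]
  have htri : ‖c - (x - p)‖ ^ 2 ≤ (‖c‖ + ‖x - p‖) ^ 2 := by
    gcongr
    exact norm_sub_le _ _
  rw [mem_closedBall, dist_eq_norm, ← pow_le_pow_iff_left₀ (norm_nonneg _) hρ two_ne_zero]
  linarith

theorem orthogonalProjection_add_add_mem_tube_inter_closedBall {E : Type*}
    [NormedAddCommGroup E] [InnerProductSpace ℝ E] {L : AffineSubspace ℝ E} [Nonempty L]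
    [L.direction.HasOrthogonalProjection] {x a c : E} {w r ε : ℝ} (hr : 0 ≤ r) (hε : 0 ≤ ε)
    (hwε : 4 * w ≤ ε * r) (hx : infDist x L ≤ r + w) (ha : a ∈ L.direction)
    (hc : c ∈ L.directionᗮ) (ha_le : ‖a‖ ≤ √ε * r) (hc_le : ‖c‖ ≤ w) :
    ↑(EuclideanGeometry.orthogonalProjection L x) + (a + c) ∈
      tube L w ∩ closedBall x ((1 + ε) * r) := by
  set p : E := ↑(EuclideanGeometry.orthogonalProjection L x)
  have hxp : x - p ∈ L.directionᗮ :=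
    EuclideanGeometry.vsub_orthogonalProjection_mem_direction_orthogonal L x
  have hxp_le : ‖x - p‖ ≤ r + w := by
    rwa [← dist_eq_norm, EuclideanGeometry.dist_orthogonalProjection_eq_infDist]
  refine ⟨?_, add_add_mem_closedBall_of_mem_orthogonal hxp ha hc (by positivity) ?_⟩
  · rw [← add_assoc, add_comm p a]
    exact add_mem_tube (AffineSubspace.vadd_mem_of_mem_direction ha
      (EuclideanGeometry.orthogonalProjection_mem x)) hc_le
  · calc ‖a‖ ^ 2 + (‖c‖ + ‖x - p‖) ^ 2 ≤ (√ε * r) ^ 2 + (w + (r + w)) ^ 2 := by gcongr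
      _ = ε * r ^ 2 + (r + 2 * w) ^ 2 := by rw [mul_pow, Real.sq_sqrt hε]; ring
      _ ≤ ((1 + ε) * r) ^ 2 := by nlinarith [(norm_nonneg c).trans hc_le]

theorem tube_ball_inter_volume_lower_bound_general (d D : ℕ)
    (L₂ : AffineSubspace ℝ (EuclideanSpace ℝ (Fin D)))
    (hL₂d : Module.finrank ℝ L₂.direction = d)
    (hL₂ne : (L₂ : Set (EuclideanSpace ℝ (Fin D))).Nonempty)
    (w r₀ ε : ℝ) (hw : 0 < w) (hr₀ : 0 < r₀) (hε : 0 < ε)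
    (hwε : 4 * w ≤ ε * r₀)
    (x : EuclideanSpace ℝ (Fin D))
    (hx : infDist x (L₂ : Set (EuclideanSpace ℝ (Fin D))) ≤ r₀ + w) :
    (volume (tube (L₂ : Set (EuclideanSpace ℝ (Fin D))) w ∩
        closedBall x ((1 + ε) * r₀))).toReal ≥
      unitBallVol d * (Real.sqrt ε * r₀) ^ d * unitBallVol (D - d) * w ^ (D - d) := by
  have : Nonempty L₂ := hL₂ne.to_subtype
  have hd_orth : finrank ℝ L₂.directionᗮ = D - d := by
    have := L₂.direction.finrank_add_finrank_orthogonal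
    rw [hL₂d, finrank_euclideanSpace_fin] at this
    omega
  have hvol := ENNReal.toReal_mono
    ((measure_mono Set.inter_subset_right).trans_lt measure_closedBall_lt_top).ne
    (volume_closedBall_mul_volume_closedBall_le L₂.direction _ fun _ ha _ hc ha_le hc_le =>
      orthogonalProjection_add_add_mem_tube_inter_closedBall hr₀.le hε.le hwε hx
        ha hc ha_le hc_le)
  rw [ENNReal.toReal_mul, toReal_volume_closedBall_eq_mul_unitBallVol hL₂d _ (by positivity),
    toReal_volume_closedBall_eq_mul_unitBallVol hd_orth _ hw.le] at hvol
  linarith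

/-- If `4w ≤ ε r₀`, `0 < ε ≤ 1`, and `dist(x, L₂) ≤ r₀ + w`, then the volume of the
intersection of the tube `T(L₂,w)` with the ball `B(x,(1+ε)r₀)` is at least
`ω_d (√ε · r₀)^d · ω_{D−d} w^{D−d}`. -/
theorem tube_ball_inter_volume_lower_bound (d D : ℕ) (hd : 0 < d) (hdD : d < D)
    (L₂ : AffineSubspace ℝ (EuclideanSpace ℝ (Fin D)))
    (hL₂d : Module.finrank ℝ L₂.direction = d)
    (hL₂ne : (L₂ : Set (EuclideanSpace ℝ (Fin D))).Nonempty)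
    (w r₀ ε : ℝ) (hw : 0 < w) (hr₀ : 0 < r₀) (hε : 0 < ε) (hε1 : ε ≤ 1)
    (hwε : 4 * w ≤ ε * r₀)
    (x : EuclideanSpace ℝ (Fin D))
    (hx : infDist x (L₂ : Set (EuclideanSpace ℝ (Fin D))) ≤ r₀ + w) :
    (volume (tube (L₂ : Set (EuclideanSpace ℝ (Fin D))) w ∩
        closedBall x ((1 + ε) * r₀))).toReal ≥
      unitBallVol d * (Real.sqrt ε * r₀) ^ d * unitBallVol (D - d) * w ^ (D - d) :=
  tube_ball_inter_volume_lower_bound_general d D L₂ hL₂d hL₂ne w r₀ ε hw hr₀ hε hwε x hx
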